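/- arXiv:2602.01664 — 4 statements merged into one kernel-verified Lean document; each statement's English description precedes it below -/
import Mathlib

section
/- Let (Ω, 𝒜, μ) be a probability space with a filtration ℱ indexed by ℕ, let Z be a finite nonempty type, and let Y : Ω → Z be a measurable random variable. Define the posterior process π_t(z) = μ[ 1_{Y = z} ∣ ℱ t ] and the Bayes risk process V_t = 1 − ⨆ z, π_t(z). Then V is a supermartingale with respect to ℱ and μ: each V_t is integrable and ℱ_t-measurable (adapted), and for all s ≤ t, μ[ V_t ∣ ℱ s ] ≤ V_s holds μ-almost everywhere. -/
open MeasureTheory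

namespace MeasureTheory.Submartingale

variable {Ω E ι κ : Type*} [Preorder ι] {m0 : MeasurableSpace Ω} {μ : Measure Ω}
  {ℱ : Filtration ι m0} [NormedAddCommGroup E] [NormedSpace ℝ E] [CompleteSpace E]

theorem finset_sup' [Lattice E] [ContinuousSup E] [HasSolidNorm E] [IsOrderedAddMonoid E]
    [IsOrderedModule ℝ E] {f : κ → ι → Ω → E} {s : Finset κ} (hs : s.Nonempty)
    (hf : ∀ k ∈ s, Submartingale (f k) ℱ μ) : Submartingale (s.sup' hs f) ℱ μ :=
  Finset.sup'_induction (p := (Submartingale · ℱ μ)) hs f (fun _ h₁ _ h₂ => h₁.sup h₂) hf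

theorem ciSup [ConditionallyCompleteLattice E] [ContinuousSup E] [HasSolidNorm E]
    [IsOrderedAddMonoid E] [IsOrderedModule ℝ E] [Fintype κ] [Nonempty κ]
    {f : κ → ι → Ω → E} (hf : ∀ k, Submartingale (f k) ℱ μ) :
    Submartingale (fun i ω => ⨆ k, f k i ω) ℱ μ := by
  convert finset_sup' Finset.univ_nonempty fun k _ => hf k using 1
  ext i ω
  simp only [Finset.sup'_apply, Finset.sup'_univ_eq_ciSup]

end MeasureTheory.Submartingale

theorem bayes_risk_process_supermartingale_general
    {Ω : Type*} {𝒜 : MeasurableSpace Ω} (μ : Measure Ω) [IsProbabilityMeasure μ]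
    (ℱ : Filtration ℕ 𝒜)
    (Z : Type*) [Fintype Z] [Nonempty Z]
    (Y : Ω → Z) :
    Supermartingale
      (fun (t : ℕ) (ω : Ω) =>
        1 - ⨆ z, (μ[Set.indicator {ω' | Y ω' = z} (fun _ => (1 : ℝ))|ℱ t]) ω)
      ℱ μ :=
  (martingale_const ℱ μ 1).supermartingale.sub_submartingale
    (Submartingale.ciSup fun _ => (martingale_condExp _ ℱ μ).submartingale)

/-- The Bayes risk process `V t = 1 - ⨆ z, π t z`, where
`π t z = μ[1_{Y = z} | ℱ t]` is the posterior process of a measurable random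
variable `Y` into a finite nonempty type, is a supermartingale (adapted,
integrable, and satisfying `μ[V t | ℱ s] ≤ᵐ[μ] V s` for `s ≤ t`). -/
theorem bayes_risk_process_supermartingale
    {Ω : Type*} {𝒜 : MeasurableSpace Ω} (μ : Measure Ω) [IsProbabilityMeasure μ]
    (ℱ : Filtration ℕ 𝒜)
    (Z : Type*) [Fintype Z] [Nonempty Z] [MeasurableSpace Z]
    [MeasurableSingletonClass Z]
    (Y : Ω → Z) (hY : Measurable Y) :
    Supermartingale
      (fun (t : ℕ) (ω : Ω) =>
        1 - ⨆ z, (μ[Set.indicator {ω' | Y ω' = z} (fun _ => (1 : ℝ))|ℱ t]) ω)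
      ℱ μ :=
  bayes_risk_process_supermartingale_general μ ℱ Z Y
end

section
/- Let (Ω, 𝒜, μ) be a probability space with a filtration ℱ indexed by ℕ, let Z be a finite nonempty type, and let Y : Ω → Z be a measurable random variable. Define π_t(z) = μ[ 1_{Y = z} ∣ ℱ t ] and V_t = 1 − ⨆ z, π_t(z). Then the expected Bayes risk t ↦ ∫ V_t dμ is antitone in t: for all s ≤ t, ∫ V_t dμ ≤ ∫ V_s dμ. -/
open MeasureTheory

lemma integrable_finset_sup' {Ω : Type*} {𝒜 : MeasurableSpace Ω} {μ : Measure Ω}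
    {ι : Type*} (s : Finset ι) (hs : s.Nonempty) (F : ι → Ω → ℝ)
    (hF : ∀ i ∈ s, Integrable (F i) μ) :
    Integrable (fun ω => s.sup' hs (fun i => F i ω)) μ := by
  revert hF
  induction hs using Finset.Nonempty.cons_induction with
  | singleton i => intro hF; simpa using hF i (by simp)
  | cons i s hi hs ih =>
    intro hF
    have h1 : Integrable (F i) μ := hF i (by simp)
    have h2 := ih (fun j hj => hF j (by simp [hj]))
    have : (fun ω => (Finset.cons i s hi).sup' (Finset.cons_nonempty hi)
        (fun j => F j ω)) = fun ω => F i ω ⊔ s.sup' hs (fun j => F j ω) := by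
      funext ω; exact Finset.sup'_cons (f := fun j => F j ω) hs
    rw [this]
    exact h1.sup h2

/-- The expected Bayes risk `t ↦ ∫ V t dμ`, where
`V t ω = 1 - ⨆ z, (μ[1_{Y = z} | ℱ t]) ω`, is antitone in `t`:
for all `s ≤ t`, `∫ V t dμ ≤ ∫ V s dμ`. -/
theorem expected_bayes_risk_antitone
    {Ω : Type*} {𝒜 : MeasurableSpace Ω} (μ : Measure Ω) [IsProbabilityMeasure μ]
    (ℱ : Filtration ℕ 𝒜)
    (Z : Type*) [Fintype Z] [Nonempty Z] [MeasurableSpace Z]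
    [MeasurableSingletonClass Z]
    (Y : Ω → Z) (hY : Measurable Y) :
    Antitone (fun (t : ℕ) =>
      ∫ ω, (1 - ⨆ z, (μ[Set.indicator {ω' | Y ω' = z} (fun _ => (1 : ℝ))|ℱ t]) ω) ∂μ) := by
  intro s t hst
  set f : Z → Ω → ℝ := fun z => Set.indicator {ω' | Y ω' = z} (fun _ => (1 : ℝ)) with hf
  set g : ℕ → Ω → ℝ := fun u ω => ⨆ z, (μ[f z|ℱ u]) ω with hg
  have hg_sup' : ∀ u ω, g u ω = Finset.univ.sup' Finset.univ_nonempty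
      (fun z => (μ[f z|ℱ u]) ω) := by
    intro u ω; rw [Finset.sup'_univ_eq_ciSup]
  have hg_int : ∀ u, Integrable (g u) μ := by
    intro u
    have := integrable_finset_sup' (μ := μ) Finset.univ Finset.univ_nonempty
      (fun z => μ[f z|ℱ u]) (fun z _ => integrable_condExp)
    refine this.congr ?_
    filter_upwards with ω using (hg_sup' u ω).symm
  have hle : ∀ u z ω, (μ[f z|ℱ u]) ω ≤ g u ω := by
    intro u z ω
    exact le_ciSup (f := fun z => (μ[f z|ℱ u]) ω) (Set.finite_range _).bddAbove z
  -- key: g s ≤ᵐ μ[g t | ℱ s]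
  have hkey : g s ≤ᵐ[μ] μ[g t|ℱ s] := by
    have h1 : ∀ z, μ[f z|ℱ s] =ᵐ[μ] μ[μ[f z|ℱ t]|ℱ s] := fun z =>
      (condExp_condExp_of_le (ℱ.mono hst) (ℱ.le t)).symm
    have h2 : ∀ z, μ[μ[f z|ℱ t]|ℱ s] ≤ᵐ[μ] μ[g t|ℱ s] := fun z =>
      condExp_mono integrable_condExp (hg_int t)
        (Filter.Eventually.of_forall fun ω => hle t z ω)
    have h3 : ∀ z, μ[f z|ℱ s] ≤ᵐ[μ] μ[g t|ℱ s] := fun z => (h1 z).le.trans (h2 z)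
    have h4 : ∀ᵐ ω ∂μ, ∀ z, (μ[f z|ℱ s]) ω ≤ (μ[g t|ℱ s]) ω := ae_all_iff.2 h3
    filter_upwards [h4] with ω hω
    exact ciSup_le hω
  have hint : ∫ ω, g s ω ∂μ ≤ ∫ ω, g t ω ∂μ := by
    calc ∫ ω, g s ω ∂μ ≤ ∫ ω, (μ[g t|ℱ s]) ω ∂μ :=
          integral_mono_ae (hg_int s) integrable_condExp hkey
      _ = ∫ ω, g t ω ∂μ := integral_condExp (ℱ.le s)
  have hrw : ∀ u, (∫ ω, (1 - ⨆ z, (μ[f z|ℱ u]) ω) ∂μ) = 1 - ∫ ω, g u ω ∂μ := by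
    intro u
    rw [integral_sub (integrable_const 1) (hg_int u)]
    simp [integral_const]
  simp only [hf] at hrw ⊢
  rw [hrw s, hrw t]
  linarith
end

section
/- Let (Ω, 𝒜, μ) be a probability space, let m be a sub-σ-algebra of 𝒜, let Z be a finite nonempty type, and let Y : Ω → Z be 𝒜-measurable. Define the posterior π(z) = μ[ 1_{Y = z} ∣ m ] for each z ∈ Z. Let ẑ : Ω → Z be an m-measurable estimator which is μ-almost everywhere a maximum-a-posteriori selection, i.e. for μ-a.e. ω, π(ẑ ω)(ω) = ⨆ z, π(z)(ω). Then the conditional error probability of ẑ equals the Bayes risk potential of the posterior: μ[ 1_{ẑ ≠ Y} ∣ m ] = 1 − ⨆ z, π(z) holds μ-almost everywhere. -/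
open MeasureTheory

/-- Auxiliary: integrability of the real indicator of a measurable set under a
finite measure (with the measurable space a plain implicit argument to avoid
instance-resolution ambiguity). -/
lemma indicator_one_integrable_aux {Ω : Type*} {mΩ : MeasurableSpace Ω}
    (μ : Measure Ω) [IsFiniteMeasure μ] {s : Set Ω} (hs : MeasurableSet s) :
    Integrable (Set.indicator s (fun _ => (1 : ℝ))) μ :=
  (integrable_const 1).indicator hs

/-- For an `m`-measurable estimator `zhat` which is `μ`-a.e. a maximum-a-posteriori
selection for the posterior `π z = μ[1_{Y = z} | m]`, the conditional error
probability of `zhat` equals the Bayes risk potential of the posterior: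
`μ[1_{zhat ≠ Y} | m] = 1 - ⨆ z, π z` μ-almost everywhere. -/
theorem map_estimator_conditional_error
    {Ω : Type*} {m : MeasurableSpace Ω} {𝒜 : MeasurableSpace Ω} (μ : Measure Ω) [IsProbabilityMeasure μ]
    (hm : m ≤ 𝒜)
    (Z : Type*) [Fintype Z] [Nonempty Z] [MeasurableSpace Z]
    [MeasurableSingletonClass Z]
    (Y : Ω → Z) (hY : Measurable Y)
    (zhat : Ω → Z) (hzhat : Measurable[m] zhat)
    (hmap : ∀ᵐ ω ∂μ,
      (μ[Set.indicator {ω' | Y ω' = zhat ω} (fun _ => (1 : ℝ))|m]) ω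
        = ⨆ z, (μ[Set.indicator {ω' | Y ω' = z} (fun _ => (1 : ℝ))|m]) ω) :
    μ[Set.indicator {ω | zhat ω ≠ Y ω} (fun _ => (1 : ℝ))|m] =ᵐ[μ]
      fun ω => 1 - ⨆ z, (μ[Set.indicator {ω' | Y ω' = z} (fun _ => (1 : ℝ))|m]) ω := by
  classical
  have hsets : ∀ z : Z, MeasurableSet[𝒜] {ω' | Y ω' = z} :=
    fun z => hY (measurableSet_singleton z)
  have hsetsA : ∀ z : Z, MeasurableSet[𝒜] {ω' | Y ω' = z} := fun z => hsets z
  have hsetsm : ∀ z : Z, MeasurableSet[m] {ω' | zhat ω' = z} :=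
    fun z => hzhat (measurableSet_singleton z)
  have hint : ∀ z : Z, Integrable (Set.indicator {ω' | Y ω' = z} (fun _ => (1:ℝ))) μ :=
    fun z => indicator_one_integrable_aux μ (hsetsA z)
  have hEset : MeasurableSet[𝒜] {ω | zhat ω = Y ω} := by
    have h : {ω | zhat ω = Y ω} = ⋃ z : Z, ({ω' | zhat ω' = z} ∩ {ω' | Y ω' = z}) := by
      ext ω
      simp only [Set.mem_setOf_eq, Set.mem_iUnion, Set.mem_inter_iff]
      constructor
      · intro h; exact ⟨Y ω, h, rfl⟩
      · rintro ⟨z, h1, h2⟩; rw [h1, h2]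
    rw [h]
    exact MeasurableSet.iUnion fun z => (hm _ (hsetsm z)).inter (hsetsA z)
  have hintE : Integrable (Set.indicator {ω | zhat ω = Y ω} (fun _ => (1:ℝ))) μ :=
    indicator_one_integrable_aux μ hEset
  have h1 : Set.indicator {ω | zhat ω ≠ Y ω} (fun _ => (1:ℝ))
      = (fun _ => (1:ℝ)) - Set.indicator {ω | zhat ω = Y ω} (fun _ => (1:ℝ)) := by
    funext ω; by_cases h : zhat ω = Y ω <;> simp [Set.indicator, h]
  -- product of indicators is the indicator of the intersection
  have hprod : ∀ z : Z, (fun ω => Set.indicator {ω' | zhat ω' = z} (fun _ => (1:ℝ)) ω *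
      Set.indicator {ω' | Y ω' = z} (fun _ => (1:ℝ)) ω)
      = Set.indicator ({ω' | zhat ω' = z} ∩ {ω' | Y ω' = z}) (fun _ => (1:ℝ)) := by
    intro z; funext ω
    by_cases h1 : zhat ω = z <;> by_cases h2 : Y ω = z <;>
      simp [Set.indicator, h1, h2]
  have hintmul : ∀ z : Z, Integrable (fun ω =>
      Set.indicator {ω' | zhat ω' = z} (fun _ => (1:ℝ)) ω *
        Set.indicator {ω' | Y ω' = z} (fun _ => (1:ℝ)) ω) μ := by
    intro z
    rw [hprod z]
    exact indicator_one_integrable_aux μ ((hm _ (hsetsm z)).inter (hsetsA z))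
  have hg : Set.indicator {ω | zhat ω = Y ω} (fun _ => (1:ℝ))
      = ∑ z : Z, (fun ω => Set.indicator {ω' | zhat ω' = z} (fun _ => (1:ℝ)) ω *
          Set.indicator {ω' | Y ω' = z} (fun _ => (1:ℝ)) ω) := by
    funext ω
    rw [Finset.sum_apply]
    rw [Finset.sum_eq_single (zhat ω)]
    · by_cases h : zhat ω = Y ω <;> simp [Set.indicator, h, eq_comm]
    · intro z _ hz; simp [Set.indicator, Ne.symm hz]
    · simp
  have hmul : ∀ z : Z,
      μ[fun ω => Set.indicator {ω' | zhat ω' = z} (fun _ => (1:ℝ)) ω *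
          Set.indicator {ω' | Y ω' = z} (fun _ => (1:ℝ)) ω|m]
        =ᵐ[μ] fun ω => Set.indicator {ω' | zhat ω' = z} (fun _ => (1:ℝ)) ω *
          (μ[Set.indicator {ω' | Y ω' = z} (fun _ => (1:ℝ))|m]) ω :=
    fun z => condExp_mul_of_stronglyMeasurable_left
      (stronglyMeasurable_const.indicator (hsetsm z)) (hintmul z) (hint z)
  have hsum : μ[Set.indicator {ω | zhat ω = Y ω} (fun _ => (1:ℝ))|m]
      =ᵐ[μ] fun ω => ∑ z : Z, Set.indicator {ω' | zhat ω' = z} (fun _ => (1:ℝ)) ω *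
          (μ[Set.indicator {ω' | Y ω' = z} (fun _ => (1:ℝ))|m]) ω := by
    rw [hg]
    refine (condExp_finset_sum (fun z _ => hintmul z) m).trans ?_
    filter_upwards [ae_all_iff.2 hmul] with ω hω
    simp only [Finset.sum_apply]
    exact Finset.sum_congr rfl fun z _ => hω z
  have hpt : ∀ ω, ∑ z : Z, Set.indicator {ω' | zhat ω' = z} (fun _ => (1:ℝ)) ω *
        (μ[Set.indicator {ω' | Y ω' = z} (fun _ => (1:ℝ))|m]) ω
      = (μ[Set.indicator {ω' | Y ω' = zhat ω} (fun _ => (1:ℝ))|m]) ω := by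
    intro ω
    rw [Finset.sum_eq_single (zhat ω)]
    · simp [Set.indicator]
    · intro z _ hz; simp [Set.indicator, Ne.symm hz]
    · simp
  have hsub : μ[Set.indicator {ω | zhat ω ≠ Y ω} (fun _ => (1:ℝ))|m]
      =ᵐ[μ] (fun _ => (1:ℝ)) - μ[Set.indicator {ω | zhat ω = Y ω} (fun _ => (1:ℝ))|m] := by
    rw [h1]
    refine (condExp_sub (integrable_const 1) hintE m).trans ?_
    rw [condExp_const hm]
  filter_upwards [hsub, hsum, hmap] with ω h₁ h₂ h₃
  simp only [Pi.sub_apply] at h₁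
  rw [h₁, h₂, hpt ω, h₃]
end

section
/- Let T be a finite type, R : T → ℝ, and let the trajectory probability factor as p θ τ = q θ τ · c τ, where c : T → ℝ satisfies c τ > 0 and does not depend on θ (the environment factor), and q : ℝ → T → ℝ satisfies q θ τ > 0 with θ' ↦ q θ' τ having derivative q' τ at a fixed θ (the policy factor). Then: (a) the log-derivative of the full likelihood equals the log-derivative of the policy factor alone, i.e. θ' ↦ log (p θ' τ) has derivative q' τ / q θ τ at θ; and (b) the masked policy-gradient estimator is exact: J(θ') = ∑ τ, p θ' τ · R τ has derivative ∑ τ, p θ τ · (q' τ / q θ τ) · R τ at θ. -/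
/-! The environment factor `c τ` is constant in `θ`, so it cancels from the score
`∂ log (q c) = (q' c) / (q c) = q' / q`; and `p · (q' / q) = q' · c` is exactly the derivative
of `p`, so differentiating `J` termwise produces the masked estimator. -/

theorem HasDerivAt.log_mul_const {f : ℝ → ℝ} {f' x : ℝ} (c : ℝ) (hf : HasDerivAt f f' x)
    (hfx : f x ≠ 0) (hc : c ≠ 0) :
    HasDerivAt (fun y => Real.log (f y * c)) (f' / f x) x := by
  simpa only [mul_div_mul_right _ _ hc] using (hf.mul_const c).log (mul_ne_zero hfx hc)

theorem hasDerivAt_sum_mul_const {T : Type*} [Fintype T] {f : ℝ → T → ℝ} {f' : T → ℝ} {x : ℝ}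
    (R : T → ℝ) (hf : ∀ τ, HasDerivAt (f · τ) (f' τ) x) :
    HasDerivAt (fun y => ∑ τ, f y τ * R τ) (∑ τ, f' τ * R τ) x :=
  HasDerivAt.fun_sum fun τ _ => (hf τ).mul_const (R τ)

/-- Correctness of the token-level masked policy-gradient estimator: if the trajectory
likelihood factors as `p θ τ = q θ τ · c τ` with a positive environment factor `c τ`
independent of `θ` and a positive differentiable policy factor `q`, then
(a) the log-derivative of the full likelihood equals that of the policy factor alone,
and (b) the expected reward `J(θ') = ∑ τ, p θ' τ · R τ` has derivative
`∑ τ, p θ τ · (q' τ / q θ τ) · R τ` at `θ` (the masked estimator is exact). -/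
theorem masked_policy_gradient_exact
    {T : Type*} [Fintype T]
    (p q : ℝ → T → ℝ) (c : T → ℝ) (R : T → ℝ) (θ : ℝ) (q' : T → ℝ)
    (hfac : ∀ θ' τ, p θ' τ = q θ' τ * c τ)
    (hc : ∀ τ, 0 < c τ)
    (hq : ∀ τ, 0 < q θ τ)
    (hderiv : ∀ τ, HasDerivAt (fun θ' => q θ' τ) (q' τ) θ) :
    (∀ τ, HasDerivAt (fun θ' => Real.log (p θ' τ)) (q' τ / q θ τ) θ) ∧
    HasDerivAt (fun θ' => ∑ τ, p θ' τ * R τ)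
      (∑ τ, p θ τ * (q' τ / q θ τ) * R τ) θ := by
  obtain rfl : p = fun θ' τ => q θ' τ * c τ := funext₂ hfac
  have score_weight : ∀ τ, q θ τ * c τ * (q' τ / q θ τ) = q' τ * c τ := fun τ => by
    field_simp [(hq τ).ne']
  refine ⟨fun τ => (hderiv τ).log_mul_const (c τ) (hq τ).ne' (hc τ).ne', ?_⟩
  simpa only [score_weight] using
    hasDerivAt_sum_mul_const R fun τ => (hderiv τ).mul_const (c τ)
end
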